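/- For all n ≥ 1, 4·Σ_{i=1}^n i·B_i = n·B_{n+1} - (n+1)·B_n, where B_n is the n-th balancing number. -/
import Mathlib


def balancing : ℕ → ℤ
  | 0 => 0
  | 1 => 1
  | n + 2 => 6 * balancing (n + 1) - balancing n

theorem stmt17 (n : ℕ) (hn : 1 ≤ n) :
    4 * (∑ i ∈ Finset.Icc 1 n, (i : ℤ) * balancing i) =
      (n : ℤ) * balancing (n + 1) - ((n : ℤ) + 1) * balancing n := by
  induction n with
  | zero => omega
  | succ m ih =>
    rcases Nat.eq_or_lt_of_le hn with h | h
    · obtain rfl : m = 0 := by omega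
      simp [balancing]
    · have hm : 1 ≤ m := by omega
      rw [Finset.sum_Icc_succ_top (by omega : 1 ≤ m + 1), mul_add, ih hm]
      show _ = _ * balancing (m + 2) - _
      rw [show balancing (m + 2) = 6 * balancing (m + 1) - balancing m from rfl]
      push_cast
      ring
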